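/- Let G be a profinite group and N a finite normal subgroup of G. If the quotient topological group G/N is orbitally sound, then G is orbitally sound, i.e., every isolated orbital closed subgroup of G is normal in G. -/

import Mathlib

/-!
An isolated orbital subgroup `H` contains every finite normal subgroup `N`: `H ⊔ N = H * N` is
again closed with open normalizer, and it contains `H` with index at most `|N|`. So `H` is the
full preimage of its image in `G ⧸ N`, and that image is isolated orbital there because the
correspondence between subgroups of `G ⧸ N` and subgroups of `G` containing `N` preserves
closedness, openness of normalizers and relative indices. Normality of the image then pulls back.
-/

/-- A closed subgroup `H` of a topological group `G` is *orbital* if it is closed and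
its normalizer is open in `G`. -/
def IsOrbital {G : Type*} [Group G] [TopologicalSpace G] (H : Subgroup G) : Prop :=
  IsClosed (H : Set G) ∧ IsOpen (Subgroup.normalizer (H : Set G) : Set G)

/-- An orbital closed subgroup `H` is *isolated orbital* if every orbital closed subgroup
properly containing `H` contains it with infinite index. -/
def IsIsolatedOrbital {G : Type*} [Group G] [TopologicalSpace G] (H : Subgroup G) : Prop :=
  IsOrbital H ∧ ∀ H' : Subgroup G, IsOrbital H' → H < H' → H.relIndex H' = 0

/-- `G` satisfies the maximum condition on closed subgroups. -/
def MaxClosedSubgroups (G : Type*) [Group G] [TopologicalSpace G] : Prop :=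
  ∀ S : Set (Subgroup G), S.Nonempty → (∀ H ∈ S, IsClosed (H : Set G)) →
    ∃ M ∈ S, ∀ K ∈ S, M ≤ K → K = M

/-- A topological group is *orbitally sound* if every isolated orbital closed subgroup
is normal. -/
def OrbitallySound (G : Type*) [Group G] [TopologicalSpace G] : Prop :=
  ∀ H : Subgroup G, IsIsolatedOrbital H → H.Normal

/-- The *isolator* of an orbital closed subgroup `H`: the closed subgroup topologically
generated by all orbital closed subgroups `L` containing `H` with finite index. -/
def isolator {G : Type*} [Group G] [TopologicalSpace G] [IsTopologicalGroup G]
    (H : Subgroup G) : Subgroup G :=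
  (⨆ L ∈ {L : Subgroup G | IsOrbital L ∧ H ≤ L ∧ H.relIndex L ≠ 0}, L).topologicalClosure

/-- The Roseblade subgroup `nio(G)`: the intersection of the normalizers of all isolated
orbital closed subgroups of `G`. -/
def nio (G : Type*) [Group G] [TopologicalSpace G] : Subgroup G :=
  ⨅ H ∈ {H : Subgroup G | IsIsolatedOrbital H}, Subgroup.normalizer (H : Set G)

namespace Subgroup

variable {G : Type*} [Group G]

theorem relIndex_sup_ne_zero_of_finite (H : Subgroup G) {N : Subgroup G} [N.Normal]
    (hN : (N : Set G).Finite) : H.relIndex (H ⊔ N) ≠ 0 := by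
  have : Finite N := hN
  rw [relIndex, index_ne_zero_iff_finite]
  refine Finite.of_surjective
    (fun n : N ↦ (QuotientGroup.mk ⟨n, mem_sup_right n.2⟩ : (H ⊔ N : Subgroup G) ⧸ _)) ?_
  rintro ⟨x, hx⟩
  -- `x = n * h` with `n ∈ N`, `h ∈ H`, so `x` lies in the coset of `n`.
  rw [← SetLike.mem_coe, sup_comm, normal_mul] at hx
  obtain ⟨n, hn, h, hh, rfl⟩ := hx
  refine ⟨⟨n, hn⟩, QuotientGroup.eq.mpr ?_⟩
  simpa [mem_subgroupOf] using hh

end Subgroup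

theorem QuotientGroup.comap_map_mk'_of_le {G : Type*} [Group G] {N H : Subgroup G} [N.Normal]
    (hNH : N ≤ H) : (H.map (mk' N)).comap (mk' N) = H :=
  Subgroup.comap_map_eq_self (by rwa [ker_mk'])

theorem IsOrbital.comap {G G' : Type*} [Group G] [TopologicalSpace G] [SeparatelyContinuousMul G]
    [Group G'] [TopologicalSpace G'] {K : Subgroup G'} (hK : IsOrbital K) (f : G →* G')
    (hf : Continuous f) : IsOrbital (K.comap f) :=
  ⟨hK.1.preimage hf,
    Subgroup.isOpen_mono (Subgroup.le_normalizer_comap f) (hK.2.preimage hf)⟩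

section IsTopologicalGroup

variable {G : Type*} [Group G] [TopologicalSpace G] [IsTopologicalGroup G]
  {H N : Subgroup G} [N.Normal]

theorem IsOrbital.sup_of_finite (hH : IsOrbital H) (hN : (N : Set G).Finite) :
    IsOrbital (H ⊔ N) := by
  refine ⟨?_, Subgroup.isOpen_mono Subgroup.normalizer_le_normalizer_sup_normal hH.2⟩
  rw [Subgroup.mul_normal]
  exact hH.1.mul_right_of_isCompact hN.isCompact

theorem IsIsolatedOrbital.le_of_finite (hH : IsIsolatedOrbital H) (hN : (N : Set G).Finite) :
    N ≤ H := by
  by_contra hNH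
  have hlt : H < H ⊔ N := left_lt_sup.mpr hNH
  exact H.relIndex_sup_ne_zero_of_finite hN (hH.2 _ (hH.1.sup_of_finite hN) hlt)

theorem IsOrbital.map_mk' (hH : IsOrbital H) (hNH : N ≤ H) :
    IsOrbital (H.map (QuotientGroup.mk' N)) := by
  refine ⟨?_, ?_⟩
  · rw [← (QuotientGroup.isQuotientMap_mk N).isClosed_preimage]
    change IsClosed (((H.map _).comap (QuotientGroup.mk' N) : Subgroup G) : Set G)
    rw [QuotientGroup.comap_map_mk'_of_le hNH]
    exact hH.1
  · exact Subgroup.isOpen_mono (Subgroup.le_normalizer_map _)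
      (QuotientGroup.isOpenMap_coe _ hH.2)

theorem IsIsolatedOrbital.map_mk' (hH : IsIsolatedOrbital H) (hNH : N ≤ H) :
    IsIsolatedOrbital (H.map (QuotientGroup.mk' N)) := by
  set π := QuotientGroup.mk' N
  have hcomap : (H.map π).comap π = H := QuotientGroup.comap_map_mk'_of_le hNH
  refine ⟨hH.1.map_mk' hNH, fun K hK hlt ↦ ?_⟩
  have hmap : (K.comap π).map π = K :=
    Subgroup.map_comap_eq_self_of_surjective (QuotientGroup.mk'_surjective N) K
  have hHK : H < K.comap π := by
    rwa [← hcomap, Subgroup.comap_lt_comap_of_surjective (QuotientGroup.mk'_surjective N)]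
  have hindex := hH.2 _ (hK.comap π continuous_quot_mk) hHK
  rwa [← hcomap, Subgroup.relIndex_comap, hmap] at hindex

end IsTopologicalGroup

theorem orbitallySound_of_quotient_by_finite_general {G : Type*} [Group G] [TopologicalSpace G]
    [IsTopologicalGroup G] (N : Subgroup G) [N.Normal] (hNfin : (N : Set G).Finite)
    (hQ : OrbitallySound (G ⧸ N)) :
    OrbitallySound G := by
  intro H hH
  have hNH : N ≤ H := hH.le_of_finite hNfin
  have hnormal : (H.map (QuotientGroup.mk' N)).Normal := hQ _ (hH.map_mk' hNH)
  exact QuotientGroup.comap_map_mk'_of_le hNH ▸ hnormal.comap (QuotientGroup.mk' N)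

/-- If `N` is a finite normal subgroup of a profinite group `G` and `G/N` is orbitally
sound, then `G` is orbitally sound. -/
theorem orbitallySound_of_quotient_by_finite {G : Type*} [Group G] [TopologicalSpace G]
    [IsTopologicalGroup G] [CompactSpace G] [T2Space G] [TotallyDisconnectedSpace G]
    (N : Subgroup G) [N.Normal] (hNfin : (N : Set G).Finite)
    (hQ : OrbitallySound (G ⧸ N)) :
    OrbitallySound G :=
  orbitallySound_of_quotient_by_finite_general N hNfin hQ
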